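/- arXiv:1409.2445 — 2 statements merged into one kernel-verified Lean document; each statement's English description precedes it below -/
import Mathlib

section
/- Let P be a finite poset. There is exactly one v \in T(P) with v(-\infty) = rank \hat{P} if and only if height(x) + depth(x) = rank \hat{P} for every x \in P. (This is the combinatorial characterization of pseudo-Gorenstein Hibi rings: R[I(P)] is pseudo-Gorenstein iff the canonical module has exactly one generator of least degree, and such generators correspond to v \in T(P) with v(-\infty) = rank \hat{P}.) -/
open Classical

/-- `Hat P` is the poset `P` with a new least element `-∞ = ⊥` and a new
greatest element `∞ = ⊤` adjoined. -/
abbrev Hat (P : Type*) := WithBot (WithTop P)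

/-- The canonical inclusion of `P` into `Hat P`. -/
def toHat {P : Type*} (x : P) : Hat P := ((x : WithTop P) : WithBot (WithTop P))

/-- The rank of a poset: the maximal length (number of covering steps) of a
chain, encoded as the maximal `n` admitting a strictly increasing sequence of
`n + 1` elements. -/
noncomputable def rankN (Q : Type*) [Preorder Q] : ℕ :=
  sSup {n : ℕ | ∃ f : Fin (n + 1) → Q, StrictMono f}

/-- The height of `x` in a poset `Q`: the rank of the subposet `{y | y ≤ x}`. -/
noncomputable def heightN {Q : Type*} [Preorder Q] (x : Q) : ℕ :=
  sSup {n : ℕ | ∃ f : Fin (n + 1) → Q, StrictMono f ∧ ∀ i, f i ≤ x}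

/-- The depth of `x` in a poset `Q`: the rank of the subposet `{y | x ≤ y}`. -/
noncomputable def depthN {Q : Type*} [Preorder Q] (x : Q) : ℕ :=
  sSup {n : ℕ | ∃ f : Fin (n + 1) → Q, StrictMono f ∧ ∀ i, x ≤ f i}

/-- `v` belongs to `S(P)`: `v : Hat P → ℕ` is order-reversing with `v ∞ = 0`. -/
def memS (P : Type*) [PartialOrder P] (v : Hat P → ℕ) : Prop :=
  v ⊤ = 0 ∧ ∀ p q : Hat P, p ≤ q → v q ≤ v p

/-- `v` belongs to `T(P)`: `v : Hat P → ℕ` is strictly order-reversing with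
`v ∞ = 0`. -/
def memT (P : Type*) [PartialOrder P] (v : Hat P → ℕ) : Prop :=
  v ⊤ = 0 ∧ ∀ p q : Hat P, p < q → v q < v p

/-- The partial order of `T(P)`: `v ≥ w` iff `v` dominates `w` pointwise and the
pointwise difference `v - w` is order-reversing. -/
def Tge (P : Type*) [PartialOrder P] (v w : Hat P → ℕ) : Prop :=
  (∀ p : Hat P, w p ≤ v p) ∧ ∀ p q : Hat P, p ≤ q → v q - w q ≤ v p - w p

/-- `v` is a minimal element of the poset `T(P)`. -/
def IsMinT (P : Type*) [PartialOrder P] (v : Hat P → ℕ) : Prop :=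
  memT P v ∧ ∀ w : Hat P → ℕ, memT P w → Tge P v w → w = v

/-- A poset is pure if all its maximal chains have the same length, equivalently
the same cardinality. -/
def IsPure (P : Type*) [PartialOrder P] : Prop :=
  ∀ C D : Set P, IsMaxChain (· ≤ ·) C → IsMaxChain (· ≤ ·) D → C.ncard = D.ncard

/-! Both `depthN` and `rankN (Hat P) - heightN` lie in `T(P)` and take the value `rank \hat P`
at `-∞`, and every `v ∈ T(P)` with `v(-∞) = rank \hat P` is squeezed between them: the longest
chain above `x` forces `depth x ≤ v x`, and the longest chain below `x` forces
`height x ≤ v(-∞) - v x`. So such a `v` is unique exactly when the two bounds coincide, i.e. when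
`height x + depth x = rank \hat P` for all `x`. -/

open Order

section FinitePoset

variable {Q : Type*} [Preorder Q] [Finite Q]

lemma height_lt_top_of_finite (x : Q) : height x < ⊤ := by
  have := Fintype.ofFinite Q
  refine lt_of_le_of_lt (height_le_iff.mpr fun p _ => ?_) (ENat.natCast_lt_top (Fintype.card Q))
  exact_mod_cast p.length_lt_card.le

lemma coheight_lt_top_of_finite (x : Q) : coheight x < ⊤ :=
  height_lt_top_of_finite (Q := Qᵒᵈ) (OrderDual.toDual x)

lemma heightN_eq_height (x : Q) : (heightN x : ℕ∞) = height x := by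
  obtain ⟨n, hn⟩ := ENat.ne_top_iff_exists.mp (height_lt_top_of_finite x).ne
  rw [← hn, Nat.cast_inj]
  refine IsGreatest.csSup_eq ⟨?_, ?_⟩
  · obtain ⟨p, hlast, rfl⟩ := exists_series_of_height_eq_coe x hn.symm
    exact ⟨p, p.strictMono, fun i => hlast ▸ p.monotone (Fin.le_last i)⟩
  · rintro m ⟨f, hf, hfx⟩
    exact_mod_cast hn ▸ length_le_height (p := LTSeries.mk m f hf) (hfx (Fin.last m))

lemma depthN_eq_coheight (x : Q) : (depthN x : ℕ∞) = coheight x := by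
  obtain ⟨n, hn⟩ := ENat.ne_top_iff_exists.mp (coheight_lt_top_of_finite x).ne
  rw [← hn, Nat.cast_inj]
  refine IsGreatest.csSup_eq ⟨?_, ?_⟩
  · obtain ⟨p, hhead, rfl⟩ := exists_series_of_coheight_eq_coe x hn.symm
    exact ⟨p, p.strictMono, fun i => hhead ▸ p.head_le i⟩
  · rintro m ⟨f, hf, hfx⟩
    exact_mod_cast hn ▸ length_le_coheight (p := LTSeries.mk m f hf) (hfx 0)

lemma heightN_strictMono : StrictMono (heightN : Q → ℕ) := fun x y hxy => by
  exact_mod_cast (heightN_eq_height x).trans_lt <| (heightN_eq_height y).symm ▸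
    height_strictMono hxy (height_lt_top_of_finite x)

lemma depthN_strictAnti : StrictAnti (depthN : Q → ℕ) := fun x y hxy => by
  exact_mod_cast (depthN_eq_coheight y).trans_lt <| (depthN_eq_coheight x).symm ▸
    coheight_strictAnti hxy (coheight_lt_top_of_finite y)

lemma heightN_le_of_strictMono {v : Q → ℕ} (hv : StrictMono v) (x : Q) : heightN x ≤ v x := by
  have := height_le_height_apply_of_strictMono v hv x
  rw [height_nat, ← heightN_eq_height] at this
  exact_mod_cast this

-- `v` is strictly monotone into `ℕᵒᵈ`, where the coheight of `n` is `n`.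
lemma depthN_le_of_strictAnti {v : Q → ℕ} (hv : StrictAnti v) (x : Q) : depthN x ≤ v x := by
  have : coheight x ≤ height (v x) :=
    coheight_le_coheight_apply_of_strictMono (OrderDual.toDual ∘ v) hv x
  rw [height_nat, ← depthN_eq_coheight] at this
  exact_mod_cast this

end FinitePoset

section BoundedPoset

variable {Q : Type*} [Preorder Q]

lemma depthN_bot [OrderBot Q] : depthN (⊥ : Q) = rankN Q := by
  unfold depthN rankN
  congr 1
  ext n
  exact ⟨fun ⟨f, hf, _⟩ => ⟨f, hf⟩, fun ⟨f, hf⟩ => ⟨f, hf, fun _ => bot_le⟩⟩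

lemma heightN_top [OrderTop Q] : heightN (⊤ : Q) = rankN Q := by
  unfold heightN rankN
  congr 1
  ext n
  exact ⟨fun ⟨f, hf, _⟩ => ⟨f, hf⟩, fun ⟨f, hf⟩ => ⟨f, hf, fun _ => le_top⟩⟩

variable [Finite Q]

lemma heightN_bot [OrderBot Q] : heightN (⊥ : Q) = 0 := by
  exact_mod_cast (heightN_eq_height ⊥).trans (height_eq_zero.mpr isMin_bot)

lemma depthN_top [OrderTop Q] : depthN (⊤ : Q) = 0 := by
  exact_mod_cast (depthN_eq_coheight ⊤).trans (coheight_eq_zero.mpr isMax_top)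

end BoundedPoset

section BoundedPartialOrder

variable {Q : Type*} [PartialOrder Q] [Finite Q]

lemma heightN_le_rankN [OrderTop Q] (x : Q) : heightN x ≤ rankN Q :=
  heightN_top (Q := Q) ▸ heightN_strictMono.monotone le_top

lemma apply_add_heightN_le_of_strictAnti [OrderBot Q] {v : Q → ℕ} (hv : StrictAnti v) (x : Q) :
    v x + heightN x ≤ v ⊥ := by
  have hle : ∀ y, v y ≤ v ⊥ := fun y => hv.antitone bot_le
  have hmono : StrictMono fun y => v ⊥ - v y := fun y z hyz => by
    dsimp only
    have := hv hyz
    have := hle y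
    omega
  have := heightN_le_of_strictMono hmono x
  have := hle x
  omega

end BoundedPartialOrder

lemma memT_depthN (P : Type*) [Finite P] [PartialOrder P] : memT P depthN :=
  ⟨depthN_top, depthN_strictAnti⟩

lemma memT_rankN_sub_heightN (P : Type*) [Finite P] [PartialOrder P] :
    memT P fun x => rankN (Hat P) - heightN x := by
  refine ⟨Nat.sub_eq_zero_of_le (heightN_top (Q := Hat P)).ge, fun x y hxy => ?_⟩
  show rankN (Hat P) - heightN y < rankN (Hat P) - heightN x
  have := heightN_strictMono hxy
  have := heightN_le_rankN y
  omega

lemma heightN_add_depthN_of_forall_toHat {P : Type*} [Finite P] [PartialOrder P]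
    (H : ∀ x : P, heightN (toHat x) + depthN (toHat x) = rankN (Hat P)) (y : Hat P) :
    heightN y + depthN y = rankN (Hat P) := by
  induction y using WithBot.recBotCoe with
  | bot => rw [heightN_bot, depthN_bot, zero_add]
  | coe y =>
    induction y using WithTop.recTopCoe with
    | top => exact (congrArg₂ (· + ·) heightN_top depthN_top).trans (add_zero _)
    | coe x => exact H x

/-- **Characterization of pseudo-Gorenstein Hibi rings.** There is exactly one
`v ∈ T(P)` with `v(-∞) = rank (Hat P)` if and only if
`height(x) + depth(x) = rank (Hat P)` for every `x ∈ P`. -/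
theorem pseudoGorenstein_iff (P : Type*) [Fintype P] [PartialOrder P] :
    (∃! v : Hat P → ℕ, memT P v ∧ v ⊥ = rankN (Hat P)) ↔
      ∀ x : P, heightN (toHat x) + depthN (toHat x) = rankN (Hat P) := by
  have hdepth : memT P depthN ∧ depthN (⊥ : Hat P) = rankN (Hat P) :=
    ⟨memT_depthN P, depthN_bot⟩
  have hcodepth : memT P (fun x => rankN (Hat P) - heightN x) ∧
      rankN (Hat P) - heightN (⊥ : Hat P) = rankN (Hat P) :=
    ⟨memT_rankN_sub_heightN P, by rw [heightN_bot, Nat.sub_zero]⟩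
  constructor
  · rintro ⟨v, -, huniq⟩ x
    have heq := congrFun ((huniq _ hdepth).trans (huniq _ hcodepth).symm) (toHat x)
    have := heightN_le_rankN (toHat x)
    omega
  · intro H
    refine ⟨depthN, hdepth, fun v ⟨hv, hvbot⟩ => funext fun y => ?_⟩
    have := depthN_le_of_strictAnti hv.2 y
    have := apply_add_heightN_le_of_strictAnti hv.2 y
    have := heightN_add_depthN_of_forall_toHat H y
    omega
end

section
/- Let P be a finite poset such that I(P) is regular hyper-planar, with canonical chain decomposition C_1 \cup ... \cup C_d. Then there is exactly one v \in T(P) with v(-\infty) = rank \hat{P} (i.e. I(P) is pseudo-Gorenstein) if and only if all the chains C_1, ..., C_d have the same length. -/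
open Classical

/-- The height of `x` inside a chain `C`: the number of elements of `C`
strictly below `x`. -/
noncomputable def heightC {P : Type*} [PartialOrder P] (C : Set P) (x : P) : ℕ :=
  {z ∈ C | z < x}.ncard

/-- A canonical chain decomposition of `P`: a partition of `P` into chains,
each of which is a maximal chain of `P`. -/
def IsCCD {P : Type*} [PartialOrder P] {d : ℕ} (C : Fin d → Set P) : Prop :=
  (∀ i, IsMaxChain (· ≤ ·) (C i)) ∧
  (∀ i j, i ≠ j → Disjoint (C i) (C j)) ∧
  (⋃ i, C i) = Set.univ

/-- The lattice of lower sets of `P` is regular hyper-planar: `P` admits a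
canonical chain decomposition and, for every canonical chain decomposition and
all `x < y` with `x ∈ Cᵢ`, `y ∈ Cⱼ`, one has `height_{Cᵢ}(x) < height_{Cⱼ}(y)`. -/
def RegularHP (P : Type*) [PartialOrder P] : Prop :=
  (∃ (d : ℕ) (C : Fin d → Set P), IsCCD C) ∧
  ∀ (d : ℕ) (C : Fin d → Set P), IsCCD C →
    ∀ (i j : Fin d) (x y : P), x ∈ C i → y ∈ C j → x < y →
      heightC (C i) x < heightC (C j) y

/-- The lattice of lower sets of `P` is regular planar: `P` admits a canonical
chain decomposition into two chains and the regularity condition holds for all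
such decompositions. -/
def RegularPlanar (P : Type*) [PartialOrder P] : Prop :=
  (∃ C : Fin 2 → Set P, IsCCD C) ∧
  ∀ C : Fin 2 → Set P, IsCCD C →
    ∀ (i j : Fin 2) (x y : P), x ∈ C i → y ∈ C j → x < y →
      heightC (C i) x < heightC (C j) y

/-!
A strictly order-reversing `v : Hat P → ℕ` with `v ∞ = 0` satisfies
`coheight x ≤ v x ≤ v (-∞) - height x`, and both bounds are maps of this kind. So such a `v` with
`v (-∞) = rank (Hat P)` is unique iff `height x + coheight x = rank (Hat P)` for all `x`.

Regularity gives `height p ≤ height_{Cᵢ}(p)` for `p ∈ Cᵢ`, by induction on `p`: everything below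
`p` has smaller chain height. Hence `rank (Hat P) = max |Cᵢ| + 1`, every element of `Cᵢ` lies on a
chain of length `|Cᵢ| + 1` through `Hat P`, and the top of a shorter chain, being maximal in `P`,
lies on none of length `max |Cᵢ| + 1`.
-/

-- A plain `open Order` would, together with `open Classical`, activate the scoped instance
-- `Classical.Order.instLT`, whose `<` is not the one of the `PartialOrder`.
open Order (height coheight krullDim)

lemma rankN_eq_height_top (Q : Type*) [Preorder Q] [OrderTop Q] [Finite Q] :
    (rankN Q : ℕ∞) = height (⊤ : Q) := by
  have hbdd : BddAbove {n : ℕ | ∃ f : Fin (n + 1) → Q, StrictMono f} := by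
    refine ⟨Nat.card Q, fun n ⟨f, hf⟩ => ?_⟩
    have := Nat.card_le_card_of_injective f hf.injective
    rw [Nat.card_fin] at this
    omega
  apply le_antisymm
  · obtain ⟨f, hf⟩ := Nat.sSup_mem (s := {n : ℕ | ∃ f : Fin (n + 1) → Q, StrictMono f})
      ⟨0, _, Subsingleton.strictMono (α := Fin 1) fun _ => (⊤ : Q)⟩ hbdd
    exact Order.length_le_height (p := LTSeries.mk _ f hf) le_top
  · exact Order.height_le fun p _ => Nat.cast_le.mpr (le_csSup hbdd ⟨p, p.strictMono⟩)

section BoundedOrder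

variable {α : Type*} [Preorder α] [BoundedOrder α]

lemma coheight_bot_eq_height_top : coheight (⊥ : α) = height (⊤ : α) := by
  exact_mod_cast Order.coheight_bot_eq_krullDim.trans Order.height_top_eq_krullDim.symm

lemma height_add_coheight_le_height_top (x : α) : height x + coheight x ≤ height (⊤ : α) := by
  have h : (↑(height x + coheight x) : WithBot ℕ∞) ≤ krullDim α := by
    rw [Order.krullDim_eq_iSup_height_add_coheight_of_nonempty]
    exact WithBot.coe_le_coe.mpr (le_iSup (fun a => height a + coheight a) x)
  exact_mod_cast h.trans Order.height_top_eq_krullDim.ge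

end BoundedOrder

section StrictAnti

variable {α : Type*} [PartialOrder α]

lemma coheight_le_of_strictAnti {v : α → ℕ} (hv : StrictAnti v) (x : α) : coheight x ≤ v x := by
  simpa using Order.coheight_le_coheight_apply_of_strictMono _ hv.dual_right x

lemma height_add_le_of_strictAnti [OrderBot α] {v : α → ℕ} (hv : StrictAnti v) (x : α) :
    height x + v x ≤ v ⊥ := by
  have hmono : StrictMono fun y => v ⊥ - v y := fun a b hab => by
    have := hv.antitone (bot_le : ⊥ ≤ a)
    have := hv hab
    show v ⊥ - v a < v ⊥ - v b
    omega
  have hx := Order.height_le_height_apply_of_strictMono _ hmono x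
  rw [Order.height_nat] at hx
  calc height x + v x ≤ ↑(v ⊥ - v x) + v x := by gcongr
    _ = v ⊥ := by rw [← Nat.cast_add, Nat.sub_add_cancel (hv.antitone bot_le)]

variable [BoundedOrder α] {n : ℕ}

lemma exists_height_eq_natCast (hn : height (⊤ : α) = n) (x : α) :
    ∃ a : ℕ, height x = a ∧ a ≤ n :=
  ENat.le_natCast_iff.mp (hn ▸ Order.height_mono le_top)

lemma exists_coheight_eq_natCast (hn : height (⊤ : α) = n) (x : α) :
    ∃ a : ℕ, coheight x = a ∧ a ≤ n :=
  ENat.le_natCast_iff.mp (hn ▸ coheight_bot_eq_height_top (α := α) ▸ Order.coheight_anti bot_le)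

lemma strictAnti_toNat_coheight (hn : height (⊤ : α) = n) :
    StrictAnti fun x : α => (coheight x).toNat := fun x y hxy => by
  obtain ⟨a, ha, -⟩ := exists_coheight_eq_natCast hn x
  obtain ⟨b, hb, -⟩ := exists_coheight_eq_natCast hn y
  have h := Order.coheight_strictAnti hxy (hb ▸ ENat.natCast_lt_top b)
  simp only [ha, hb, ENat.toNat_natCast] at h ⊢
  exact_mod_cast h

lemma strictAnti_sub_toNat_height (hn : height (⊤ : α) = n) :
    StrictAnti fun x : α => n - (height x).toNat := fun x y hxy => by
  obtain ⟨a, ha, -⟩ := exists_height_eq_natCast hn x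
  obtain ⟨b, hb, hbn⟩ := exists_height_eq_natCast hn y
  have h := Order.height_strictMono hxy (ha ▸ ENat.natCast_lt_top a)
  simp only [ha, hb, ENat.toNat_natCast, Nat.cast_lt] at h ⊢
  omega

theorem existsUnique_strictAnti_iff_height_add_coheight_eq (hn : height (⊤ : α) = n) :
    (∃! v : α → ℕ, (v ⊤ = 0 ∧ StrictAnti v) ∧ v ⊥ = n) ↔
      ∀ x : α, height x + coheight x = n := by
  have hcoheight_bot : coheight (⊥ : α) = n := coheight_bot_eq_height_top.trans hn
  constructor
  · rintro ⟨v, -, huniq⟩ x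
    have hco := huniq _ ⟨⟨by simp, strictAnti_toNat_coheight hn⟩, by simp [hcoheight_bot]⟩
    have hht := huniq _ ⟨⟨by simp [hn], strictAnti_sub_toNat_height hn⟩, by simp⟩
    have hx := congrFun (hco.trans hht.symm) x
    obtain ⟨a, ha, han⟩ := exists_height_eq_natCast hn x
    obtain ⟨b, hb, -⟩ := exists_coheight_eq_natCast hn x
    simp only [ha, hb, ENat.toNat_natCast] at hx ⊢
    norm_cast
    omega
  · intro hpure
    refine ⟨fun x => (coheight x).toNat,
      ⟨⟨by simp, strictAnti_toNat_coheight hn⟩, by simp [hcoheight_bot]⟩, ?_⟩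
    rintro v ⟨⟨-, hv⟩, hv_bot⟩
    funext x
    have hlow := coheight_le_of_strictAnti hv x
    have hhigh := height_add_le_of_strictAnti hv x
    obtain ⟨a, ha, -⟩ := exists_height_eq_natCast hn x
    obtain ⟨b, hb, -⟩ := exists_coheight_eq_natCast hn x
    have hx := hpure x
    simp only [ha, hb, hv_bot, ENat.toNat_natCast] at hlow hhigh hx ⊢
    norm_cast at hlow hhigh hx
    omega

end StrictAnti

section Chain

variable {α : Type*} [PartialOrder α] {s : Set α}

lemma IsChain.ncard_le_height (hs : IsChain (· ≤ ·) s) (hfin : s.Finite) {p : α}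
    (hlt : ∀ z ∈ s, z < p) : (s.ncard : ℕ∞) ≤ height p := by
  obtain ⟨n, hn⟩ : ∃ n, s.ncard = n := ⟨_, rfl⟩
  induction n generalizing s p with
  | zero => simp [hn]
  | succ n ih =>
    obtain ⟨y, hy⟩ := hfin.exists_maximal (Set.nonempty_of_ncard_ne_zero (by omega))
    have hbelow : ∀ z ∈ s \ {y}, z < y := fun z ⟨hz, hzy⟩ =>
      lt_of_le_of_ne ((hs.total hz hy.1).elim id (hy.2 hz)) hzy
    have hrest : (s \ {y}).ncard = n := by
      rw [Set.ncard_sdiff_singleton_of_mem hy.1, hn, Nat.add_sub_cancel]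
    calc (s.ncard : ℕ∞) = n + 1 := by rw [hn, Nat.cast_succ]
      _ ≤ height y + 1 := by
          gcongr
          exact hrest ▸ ih (hs.mono Set.sdiff_subset) hfin.sdiff hbelow hrest
      _ ≤ height p := Order.height_add_one_le (hlt y hy.1)

lemma IsChain.ncard_le_coheight (hs : IsChain (· ≤ ·) s) (hfin : s.Finite) {p : α}
    (hgt : ∀ z ∈ s, p < z) : (s.ncard : ℕ∞) ≤ coheight p :=
  IsChain.ncard_le_height (α := αᵒᵈ) hs.symm hfin hgt

lemma IsChain.ncard_le_height_add_coheight (hs : IsChain (· ≤ ·) s) (hfin : s.Finite) {p : α}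
    (hp : p ∈ s) : (s.ncard : ℕ∞) ≤ height p + coheight p + 1 := by
  set below := {z ∈ s | z < p}
  set above := {z ∈ s | p < z}
  have hcover : s ⊆ below ∪ insert p above := fun z hz => by
    rcases hs.total hz hp with hzp | hpz
    · rcases hzp.lt_or_eq with hlt | rfl
      · exact Or.inl ⟨hz, hlt⟩
      · exact Or.inr (Set.mem_insert _ _)
    · rcases hpz.lt_or_eq with hlt | rfl
      · exact Or.inr (Set.mem_insert_of_mem _ ⟨hz, hlt⟩)
      · exact Or.inr (Set.mem_insert _ _)
  have hbelow_fin : below.Finite := hfin.subset (Set.sep_subset _ _)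
  have habove_fin : above.Finite := hfin.subset (Set.sep_subset _ _)
  have hcard : s.ncard ≤ below.ncard + (above.ncard + 1) :=
    (Set.ncard_le_ncard hcover (hbelow_fin.union (habove_fin.insert p))).trans
      ((Set.ncard_union_le _ _).trans (Nat.add_le_add_left (Set.ncard_insert_le _ _) _))
  have hlow := (hs.mono (Set.sep_subset _ _)).ncard_le_height hbelow_fin (p := p) fun _ hz => hz.2
  have hhigh := (hs.mono (Set.sep_subset _ _)).ncard_le_coheight habove_fin (p := p)
    fun _ hz => hz.2
  calc (s.ncard : ℕ∞) ≤ below.ncard + (above.ncard + 1) := by exact_mod_cast hcard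
    _ ≤ height p + coheight p + 1 := by rw [← add_assoc]; gcongr

lemma IsMaxChain.exists_isMax (hs : IsMaxChain (· ≤ ·) s) (hfin : s.Finite)
    (hne : s.Nonempty) : ∃ p ∈ s, IsMax p := by
  obtain ⟨p, hp⟩ := hfin.exists_maximal hne
  have hle : ∀ b ∈ s, b ≤ p := fun b hb => (hs.1.total hb hp.1).elim id (hp.2 hb)
  refine ⟨p, hp.1, fun z hpz => hle z ?_⟩
  exact (Flag.mem_iff_forall_le_or_ge (s := Flag.ofIsMaxChain s hs)).mpr
    fun b hb => Or.inr ((hle b hb).trans hpz)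

lemma heightC_lt_ncard (hfin : s.Finite) {p : α} (hp : p ∈ s) : heightC s p < s.ncard :=
  Set.ncard_lt_ncard ((Set.ssubset_iff_of_subset (Set.sep_subset _ _)).mpr
    ⟨p, hp, fun h => h.2.false⟩) hfin

end Chain

section Hat

variable {P : Type*} [PartialOrder P]

@[simp] lemma height_toHat (p : P) : height (toHat p) = height p + 1 := by
  simp [toHat]

@[simp] lemma coheight_toHat (p : P) : coheight (toHat p) = coheight p + 1 := by
  simp [toHat]

lemma forall_height_add_coheight_hat_iff_le :
    (∀ x : Hat P, height x + coheight x = height (⊤ : Hat P)) ↔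
      ∀ p : P, height (⊤ : Hat P) ≤ height p + coheight p + 2 := by
  have hsum (p : P) : height (toHat p) + coheight (toHat p) = height p + coheight p + 2 := by
    rw [height_toHat, coheight_toHat]; ring
  refine ⟨fun h p => (hsum p ▸ h (toHat p)).ge, fun h x => ?_⟩
  induction x using WithBot.recBotCoe with
  | bot => simp [coheight_bot_eq_height_top]
  | coe y =>
    induction y using WithTop.recTopCoe with
    | top => simp
    | coe p => exact (height_add_coheight_le_height_top _).antisymm (hsum p ▸ h p)

lemma IsChain.ncard_add_one_le_height_top_hat {s : Set P} (hs : IsChain (· ≤ ·) s)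
    (hfin : s.Finite) : (s.ncard : ℕ∞) + 1 ≤ height (⊤ : Hat P) := by
  rcases s.eq_empty_or_nonempty with rfl | ⟨p, hp⟩
  · rw [Set.ncard_empty, Nat.cast_zero, zero_add]
    exact Order.one_le_iff_pos.mpr (Order.height_pos_of_bot_lt bot_lt_top)
  calc (s.ncard : ℕ∞) + 1 ≤ height p + coheight p + 1 + 1 := by
        gcongr; exact hs.ncard_le_height_add_coheight hfin hp
    _ = height (toHat p) + coheight (toHat p) := by simp only [height_toHat, coheight_toHat]; ring
    _ ≤ height (⊤ : Hat P) := height_add_coheight_le_height_top _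

end Hat

section Regular

variable {P : Type*} [PartialOrder P] {d : ℕ} {C : Fin d → Set P}

lemma IsCCD.exists_mem (hC : IsCCD C) (p : P) : ∃ i, p ∈ C i :=
  Set.mem_iUnion.mp (hC.2.2 ▸ Set.mem_univ p)

variable [Finite P]

lemma RegularHP.height_le_heightC (hreg : RegularHP P) (hC : IsCCD C) {i : Fin d} {p : P}
    (hp : p ∈ C i) : height p ≤ heightC (C i) p := by
  induction p using WellFoundedLT.induction generalizing i with
  | ind p ih =>
    refine Order.height_le_coe_iff.mpr fun y hy => ?_
    obtain ⟨j, hj⟩ := hC.exists_mem y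
    exact (ih y hy hj).trans_lt (by exact_mod_cast hreg.2 d C hC j i y p hj hp hy)

lemma RegularHP.height_top_hat_le (hreg : RegularHP P) (hC : IsCCD C) {c : ℕ}
    (hc : ∀ i, (C i).ncard = c) : height (⊤ : Hat P) ≤ c + 1 := by
  refine Order.height_le_coe_iff.mpr fun x hx => ?_
  induction x using WithBot.recBotCoe with
  | bot => simp
  | coe y =>
    induction y using WithTop.recTopCoe with
    | top => exact absurd hx (lt_irrefl _)
    | coe p =>
      obtain ⟨i, hi⟩ := hC.exists_mem p
      have hlt := hc i ▸ heightC_lt_ncard (Set.toFinite _) hi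
      calc height (toHat p) = height p + 1 := height_toHat p
        _ ≤ heightC (C i) p + 1 := by gcongr; exact hreg.height_le_heightC hC hi
        _ < c + 1 := by exact_mod_cast Nat.add_lt_add_right hlt 1

theorem RegularHP.forall_height_add_coheight_hat_iff_ncard_eq (hreg : RegularHP P)
    (hC : IsCCD C) :
    (∀ x : Hat P, height x + coheight x = height (⊤ : Hat P)) ↔
      ∀ i j : Fin d, (C i).ncard = (C j).ncard := by
  rw [forall_height_add_coheight_hat_iff_le]
  constructor
  · intro hpure
    suffices h : ∀ i j, ¬ (C i).ncard < (C j).ncard from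
      fun i j => le_antisymm (not_lt.mp (h j i)) (not_lt.mp (h i j))
    intro i j hij
    have hne : (C i).Nonempty := (hC.1 i).nonempty_iff.mp
      ((hC.1 j).nonempty_iff.mpr (Set.nonempty_of_ncard_ne_zero (by omega)))
    obtain ⟨p, hp, hmax⟩ := (hC.1 i).exists_isMax (Set.toFinite _) hne
    have hshort := heightC_lt_ncard (Set.toFinite _) hp
    refine lt_irrefl ((C j).ncard + 1 : ℕ∞) ?_
    calc ((C j).ncard + 1 : ℕ∞) ≤ height (⊤ : Hat P) :=
          (hC.1 j).1.ncard_add_one_le_height_top_hat (Set.toFinite _)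
      _ ≤ height p + 2 := by simpa [Order.coheight_eq_zero.mpr hmax] using hpure p
      _ ≤ heightC (C i) p + 2 := by gcongr; exact hreg.height_le_heightC hC hp
      _ < (C j).ncard + 1 := by exact_mod_cast (by omega : heightC (C i) p + 2 < (C j).ncard + 1)
  · intro hcard p
    obtain ⟨i, hi⟩ := hC.exists_mem p
    calc height (⊤ : Hat P) ≤ (C i).ncard + 1 := hreg.height_top_hat_le hC fun j => hcard j i
      _ ≤ height p + coheight p + 1 + 1 := by
          gcongr; exact (hC.1 i).1.ncard_le_height_add_coheight (Set.toFinite _) hi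
      _ = height p + coheight p + 2 := by ring

end Regular

/-- If `I(P)` is regular hyper-planar with canonical chain decomposition
`C₁ ∪ … ∪ C_d`, then there is exactly one `v ∈ T(P)` with
`v(-∞) = rank (Hat P)` (i.e. `I(P)` is pseudo-Gorenstein) if and only if all
chains `C₁, …, C_d` have the same length. -/
theorem pseudoGorenstein_iff_equal_lengths (P : Type*) [Fintype P]
    [PartialOrder P] (hreg : RegularHP P) (d : ℕ) (C : Fin d → Set P)
    (hC : IsCCD C) :
    (∃! v : Hat P → ℕ, memT P v ∧ v ⊥ = rankN (Hat P)) ↔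
      ∀ i j : Fin d, (C i).ncard = (C j).ncard := by
  have hrank := rankN_eq_height_top (Hat P)
  rw [← hreg.forall_height_add_coheight_hat_iff_ncard_eq hC, ← hrank]
  exact existsUnique_strictAnti_iff_height_add_coheight_eq hrank.symm
end
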